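/- arXiv:2601.02022 — 4 statements merged into one kernel-verified Lean document; each statement's English description precedes it below -/
import Mathlib

section
/- Let V be a d×d real symmetric positive definite matrix, let u ∈ ℝᵈ satisfy ‖u‖₂ ≤ 1 and uᵀ V⁻¹ u ≥ 2, and let p ∈ (0, 1]. Then (2/3) ‖u‖_{V⁻¹}^{2p} ≤ ‖u‖_{V^{−1−p}}² / (1 + ‖u‖_{V⁻¹}²). -/
open Matrix

/-- The Mahalanobis norm `‖x‖_B = √(xᵀ B x)`. -/
noncomputable def mnorm {d : ℕ} (B : Matrix (Fin d) (Fin d) ℝ) (x : Fin d → ℝ) : ℝ :=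
  Real.sqrt (x ⬝ᵥ B *ᵥ x)

/-- Real matrix power of a symmetric matrix, via the spectral decomposition
(junk value `0` on non-Hermitian matrices). -/
noncomputable def mpow {d : ℕ} (A : Matrix (Fin d) (Fin d) ℝ) (q : ℝ) :
    Matrix (Fin d) (Fin d) ℝ :=
  if hA : A.IsHermitian then
    (hA.eigenvectorUnitary : Matrix (Fin d) (Fin d) ℝ) *
      Matrix.diagonal (fun i => hA.eigenvalues i ^ q) *
      star (hA.eigenvectorUnitary : Matrix (Fin d) (Fin d) ℝ)
  else 0

/-!
Diagonalize `V = U diag(λ) Uᵀ` and put `c = Uᵀ u`. The weights `c_i²` sum to `‖u‖² ≤ 1`, so the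
weighted Hölder inequality gives Jensen's inequality for `t ↦ t ^ (1 + p)` with these
sub-probability weights: `(∑ c_i² λ_i⁻¹) ^ (1 + p) ≤ ∑ c_i² λ_i ^ (-1 - p)`, that is
`S ^ (1 + p) ≤ ‖u‖²_{V^(-1-p)}` where `S = ‖u‖²_{V⁻¹}`. Finally `S ≥ 2` gives `1 + S ≤ 3 S / 2`.
-/

theorem Real.rpow_sum_mul_le_sum_mul_rpow_of_sum_le_one {ι : Type*} (s : Finset ι) {r : ℝ}
    (hr : 1 ≤ r) {w x : ι → ℝ} (hw : ∀ i, 0 ≤ w i) (hx : ∀ i, 0 ≤ x i) (hw1 : ∑ i ∈ s, w i ≤ 1) :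
    (∑ i ∈ s, w i * x i) ^ r ≤ ∑ i ∈ s, w i * x i ^ r := by
  have hr0 : 0 < r := by linarith
  have hsum : 0 ≤ ∑ i ∈ s, w i * x i ^ r :=
    Finset.sum_nonneg fun i _ => mul_nonneg (hw i) (Real.rpow_nonneg (hx i) r)
  have holder : ∑ i ∈ s, w i * x i ≤ (∑ i ∈ s, w i * x i ^ r) ^ r⁻¹ := by
    calc ∑ i ∈ s, w i * x i
        ≤ (∑ i ∈ s, w i) ^ (1 - r⁻¹) * (∑ i ∈ s, w i * x i ^ r) ^ r⁻¹ :=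
          Real.inner_le_weight_mul_Lp_of_nonneg s hr w x hw hx
      _ ≤ (∑ i ∈ s, w i * x i ^ r) ^ r⁻¹ := by
          refine mul_le_of_le_one_left (Real.rpow_nonneg hsum _) ?_
          exact Real.rpow_le_one (Finset.sum_nonneg fun i _ => hw i) hw1
            (sub_nonneg.mpr (inv_le_one_of_one_le₀ hr))
  calc (∑ i ∈ s, w i * x i) ^ r
      ≤ ((∑ i ∈ s, w i * x i ^ r) ^ r⁻¹) ^ r :=
        Real.rpow_le_rpow (Finset.sum_nonneg fun i _ => mul_nonneg (hw i) (hx i)) holder hr0.le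
    _ = ∑ i ∈ s, w i * x i ^ r := Real.rpow_inv_rpow hsum hr0.ne'

namespace Matrix

variable {n : Type*} [Fintype n] [DecidableEq n]

theorem IsHermitian.dotProduct_cfc_mulVec {A : Matrix n n ℝ} (hA : A.IsHermitian) (f : ℝ → ℝ)
    (u : n → ℝ) :
    u ⬝ᵥ cfc f A *ᵥ u =
      ∑ i, (star (hA.eigenvectorUnitary : Matrix n n ℝ) *ᵥ u) i ^ 2 * f (hA.eigenvalues i) := by
  have hUu : u ᵥ* (hA.eigenvectorUnitary : Matrix n n ℝ) =
      star (hA.eigenvectorUnitary : Matrix n n ℝ) *ᵥ u := by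
    rw [star_eq_conjTranspose, conjTranspose_eq_transpose_of_trivial, mulVec_transpose]
  rw [hA.cfc_eq, IsHermitian.cfc, Unitary.conjStarAlgAut_apply, ← mulVec_mulVec, ← mulVec_mulVec,
    dotProduct_mulVec, dotProduct_mulVec, hUu, dotProduct]
  simp only [vecMul_diagonal, Function.comp_apply, RCLike.ofReal_real_eq_id, id]
  exact Finset.sum_congr rfl fun i _ => by ring

end Matrix

theorem mpow_eq_cfc {d : ℕ} {A : Matrix (Fin d) (Fin d) ℝ} (hA : A.IsHermitian) (q : ℝ) :
    mpow A q = cfc (fun x : ℝ => x ^ q) A := by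
  rw [mpow, dif_pos hA, hA.cfc_eq, IsHermitian.cfc, Unitary.conjStarAlgAut_apply]
  rfl

theorem Matrix.PosDef.inv_eq_mpow_neg_one {d : ℕ} {A : Matrix (Fin d) (Fin d) ℝ}
    (hA : A.PosDef) : A⁻¹ = mpow A (-1) := by
  simp only [mpow_eq_cfc hA.isHermitian, Real.rpow_neg_one]
  rw [nonsing_inv_eq_ringInverse]
  exact (cfc_ringInverse_id (R := ℝ) A hA.isUnit hA.isHermitian).symm

theorem Matrix.PosSemidef.rpow_dotProduct_mpow_mulVec_le {d : ℕ} {A : Matrix (Fin d) (Fin d) ℝ}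
    (hA : A.PosSemidef) {u : Fin d → ℝ} (hu : u ⬝ᵥ u ≤ 1) (q : ℝ) {r : ℝ} (hr : 1 ≤ r) :
    (u ⬝ᵥ mpow A q *ᵥ u) ^ r ≤ u ⬝ᵥ mpow A (q * r) *ᵥ u := by
  have hH := hA.isHermitian
  have hquad (f : ℝ → ℝ) := hH.dotProduct_cfc_mulVec f u
  have hnorm := hquad fun _ => 1
  rw [cfc_const_one ℝ A, one_mulVec] at hnorm
  simp only [mpow_eq_cfc hH, hquad, Real.rpow_mul (hA.eigenvalues_nonneg _)]
  exact Real.rpow_sum_mul_le_sum_mul_rpow_of_sum_le_one _ hr (fun _ => sq_nonneg _)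
    (fun i => Real.rpow_nonneg (hA.eigenvalues_nonneg i) _) (by simpa [hnorm] using hu)

theorem mnorm_sq {d : ℕ} {B : Matrix (Fin d) (Fin d) ℝ} {x : Fin d → ℝ} (h : 0 ≤ x ⬝ᵥ B *ᵥ x) :
    mnorm B x ^ 2 = x ⬝ᵥ B *ᵥ x :=
  Real.sq_sqrt h

theorem mnorm_rpow_two_mul {d : ℕ} {B : Matrix (Fin d) (Fin d) ℝ} {x : Fin d → ℝ}
    (h : 0 ≤ x ⬝ᵥ B *ᵥ x) (p : ℝ) : mnorm B x ^ (2 * p) = (x ⬝ᵥ B *ᵥ x) ^ p := by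
  rw [mnorm, Real.sqrt_eq_rpow, ← Real.rpow_mul h]
  ring_nf

theorem two_thirds_mul_rpow_le_div {s t p : ℝ} (hs : 2 ≤ s) (hst : s ^ (1 + p) ≤ t) :
    2 / 3 * s ^ p ≤ t / (1 + s) := by
  have hs0 : 0 < s := by linarith
  rw [le_div_iff₀ (by linarith), Real.rpow_add hs0, Real.rpow_one] at *
  calc 2 / 3 * s ^ p * (1 + s) ≤ s * s ^ p := by nlinarith [Real.rpow_pos_of_pos hs0 p]
    _ ≤ t := by linarith

theorem holder_algebra_general {d : ℕ} (V : Matrix (Fin d) (Fin d) ℝ) (hV : V.PosDef)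
    (u : Fin d → ℝ) (hu : Real.sqrt (u ⬝ᵥ u) ≤ 1) (hu2 : 2 ≤ u ⬝ᵥ V⁻¹ *ᵥ u)
    (p : ℝ) (hp0 : 0 < p) :
    2 / 3 * mnorm V⁻¹ u ^ (2 * p) ≤
      mnorm (mpow V (-1 - p)) u ^ 2 / (1 + mnorm V⁻¹ u ^ 2) := by
  have hST : (u ⬝ᵥ V⁻¹ *ᵥ u) ^ (1 + p) ≤ u ⬝ᵥ mpow V (-1 - p) *ᵥ u := by
    have := hV.posSemidef.rpow_dotProduct_mpow_mulVec_le (Real.sqrt_le_one.mp hu) (-1)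
      (r := 1 + p) (by linarith)
    rwa [← hV.inv_eq_mpow_neg_one, show -1 * (1 + p) = -1 - p by ring] at this
  have hS0 : 0 ≤ u ⬝ᵥ V⁻¹ *ᵥ u := by linarith
  rw [mnorm_rpow_two_mul hS0, mnorm_sq hS0, mnorm_sq ((Real.rpow_nonneg hS0 _).trans hST)]
  exact two_thirds_mul_rpow_le_div hu2 hST

/-- Lemma 3 of the paper (Hölder-algebra lemma). -/
theorem holder_algebra {d : ℕ} (V : Matrix (Fin d) (Fin d) ℝ) (hV : V.PosDef)
    (u : Fin d → ℝ) (hu : Real.sqrt (u ⬝ᵥ u) ≤ 1) (hu2 : 2 ≤ u ⬝ᵥ V⁻¹ *ᵥ u)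
    (p : ℝ) (hp0 : 0 < p) (hp1 : p ≤ 1) :
    2 / 3 * mnorm V⁻¹ u ^ (2 * p) ≤
      mnorm (mpow V (-1 - p)) u ^ 2 / (1 + mnorm V⁻¹ u ^ 2) :=
  holder_algebra_general V hV u hu hu2 p hp0
end

section
/- Let V be a d×d real symmetric positive definite matrix and u ∈ ℝᵈ satisfy uᵀ V⁻¹ u ≤ 2. Then uᵀ V⁻¹ u ≤ 2 log(det(V + u uᵀ) / det V). -/
/-! By the matrix determinant lemma, `det (V + u uᵀ) / det V = 1 + x` with `x = uᵀ V⁻¹ u ≥ 0`.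
For `0 ≤ x ≤ 2`, `log (1 + x) ≥ 2x / (x + 2) ≥ x / 2`. -/

open Matrix

theorem Matrix.det_add_vecMulVec {m R : Type*} [Fintype m] [DecidableEq m] [CommRing R]
    {A : Matrix m m R} (hA : IsUnit A.det) (u v : m → R) :
    (A + vecMulVec u v).det = A.det * (1 + v ⬝ᵥ A⁻¹ *ᵥ u) := by
  rw [vecMulVec_eq Unit, det_add_replicateCol_mul_replicateRow hA, Matrix.mul_assoc,
    ← replicateCol_mulVec, det_one_add_mul_comm, det_one_add_replicateCol_mul_replicateRow]

theorem Real.le_two_mul_log_one_add {x : ℝ} (h0 : 0 ≤ x) (h2 : x ≤ 2) :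
    x ≤ 2 * Real.log (1 + x) := by
  have h : x / 2 ≤ 2 * x / (x + 2) := by
    rw [div_le_div_iff₀ two_pos (by linarith)]
    nlinarith
  linarith [Real.le_log_one_add_of_nonneg h0]

/-- The small-norm case of the per-step bound in the proof of the
generalized elliptical potential lemma. -/
theorem small_norm_log_det {d : ℕ} (V : Matrix (Fin d) (Fin d) ℝ) (hV : V.PosDef)
    (u : Fin d → ℝ) (hu : u ⬝ᵥ V⁻¹ *ᵥ u ≤ 2) :
    u ⬝ᵥ V⁻¹ *ᵥ u ≤ 2 * Real.log ((V + vecMulVec u u).det / V.det) := by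
  have hdet : V.det ≠ 0 := hV.det_pos.ne'
  have hratio : (V + vecMulVec u u).det / V.det = 1 + u ⬝ᵥ V⁻¹ *ᵥ u := by
    rw [det_add_vecMulVec hdet.isUnit, mul_div_cancel_left₀ _ hdet]
  rw [hratio]
  exact Real.le_two_mul_log_one_add (hV.inv.posSemidef.dotProduct_mulVec_nonneg u) hu
end

section
/- Let A and B be d×d real symmetric positive definite matrices and p ∈ (0, 1]. Then tr(B^p) − tr(A^p) ≤ p · tr(A^{p−1} (B − A)). -/
open Matrix

/-!
Diagonalize `A = U diag(a) Uᵀ` and `B = V diag(b) Vᵀ` and put `w i j = ((Uᵀ V) i j)²`. Every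
trace in the inequality is a `w`-weighted double sum over pairs of eigenvalues,
`tr(A^q B^r) = ∑ i j, w i j * a i ^ q * b j ^ r`, with `A^0 = B^0 = 1` and `A^1 = A`, `B^1 = B`.
The inequality then follows termwise from the tangent-line bound
`y ^ p ≤ x ^ p + p x ^ (p - 1) (y - x)` for the concave function `t ↦ t ^ p`.
-/

theorem Real.rpow_le_rpow_add_mul_rpow_sub_one_mul_sub {x y p : ℝ} (hx : 0 < x) (hy : 0 ≤ y)
    (hp0 : 0 ≤ p) (hp1 : p ≤ 1) : y ^ p ≤ x ^ p + p * x ^ (p - 1) * (y - x) := by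
  have hbern : (y / x) ^ p ≤ 1 + p * (y / x - 1) := by
    simpa using rpow_one_add_le_one_add_mul_self (s := y / x - 1)
      (by linarith [div_nonneg hy hx.le]) hp0 hp1
  have hxp : x ^ p = x ^ (p - 1) * x := by rw [← rpow_add_one hx.ne', sub_add_cancel]
  rw [div_rpow hy hx.le, div_le_iff₀ (rpow_pos_of_pos hx p)] at hbern
  calc y ^ p ≤ (1 + p * (y / x - 1)) * x ^ p := hbern
    _ = x ^ p + p * x ^ (p - 1) * (y - x) := by rw [hxp]; field_simp

theorem Real.sum_sum_mul_rpow_sub_le {ι κ : Type*} [Fintype ι] [Fintype κ]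
    {w : ι → κ → ℝ} {a : ι → ℝ} {b : κ → ℝ} {p : ℝ} (hw : ∀ i j, 0 ≤ w i j)
    (ha : ∀ i, 0 < a i) (hb : ∀ j, 0 ≤ b j) (hp0 : 0 ≤ p) (hp1 : p ≤ 1) :
    ∑ i, ∑ j, w i j * b j ^ p - ∑ i, ∑ j, w i j * a i ^ p ≤
      p * (∑ i, ∑ j, w i j * a i ^ (p - 1) * b j - ∑ i, ∑ j, w i j * a i ^ p) := by
  simp only [← Finset.sum_sub_distrib, Finset.mul_sum]
  refine Finset.sum_le_sum fun i _ => Finset.sum_le_sum fun j _ => ?_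
  have htangent := rpow_le_rpow_add_mul_rpow_sub_one_mul_sub (ha i) (hb j) hp0 hp1
  have hapow : a i ^ p = a i ^ (p - 1) * a i := by
    rw [← rpow_add_one (ha i).ne', sub_add_cancel]
  calc w i j * b j ^ p - w i j * a i ^ p = w i j * (b j ^ p - a i ^ p) := by ring
    _ ≤ w i j * (p * a i ^ (p - 1) * (b j - a i)) := by gcongr; exacts [hw i j, by linarith]
    _ = p * (w i j * a i ^ (p - 1) * b j - w i j * a i ^ p) := by rw [hapow]; ring

theorem Matrix.trace_diagonal_mul_mul_diagonal_mul_star {n : Type*} [Fintype n] [DecidableEq n]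
    (W : Matrix n n ℝ) (x y : n → ℝ) :
    (diagonal x * W * diagonal y * star W).trace = ∑ i, ∑ j, W i j ^ 2 * x i * y j := by
  refine Finset.sum_congr rfl fun i _ => ?_
  rw [diag_apply, mul_apply]
  simp only [mul_diagonal, diagonal_mul, star_apply, star_trivial]
  exact Finset.sum_congr rfl fun j _ => by ring

theorem Matrix.trace_conj_diagonal_mul_conj_diagonal {n : Type*} [Fintype n] [DecidableEq n]
    (U V : Matrix n n ℝ) (x y : n → ℝ) :
    (U * diagonal x * star U * (V * diagonal y * star V)).trace =
      ∑ i, ∑ j, (star U * V) i j ^ 2 * x i * y j := by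
  rw [← trace_diagonal_mul_mul_diagonal_mul_star, star_mul, star_star]
  simp only [Matrix.mul_assoc]
  rw [trace_mul_comm U]
  simp only [Matrix.mul_assoc]

section mpow

variable {d : ℕ} {A B : Matrix (Fin d) (Fin d) ℝ}

theorem Matrix.IsHermitian.mpow_eq (hA : A.IsHermitian) (q : ℝ) :
    mpow A q = (hA.eigenvectorUnitary : Matrix (Fin d) (Fin d) ℝ) *
      diagonal (fun i => hA.eigenvalues i ^ q) *
      star (hA.eigenvectorUnitary : Matrix (Fin d) (Fin d) ℝ) :=
  dif_pos hA

theorem Matrix.IsHermitian.mpow_zero (hA : A.IsHermitian) : mpow A 0 = 1 := by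
  simp [hA.mpow_eq]

theorem Matrix.IsHermitian.mpow_one (hA : A.IsHermitian) : mpow A 1 = A := by
  conv_rhs => rw [hA.spectral_theorem, Unitary.conjStarAlgAut_apply]
  simp [hA.mpow_eq]

theorem Matrix.PosDef.mpow_mul_mpow (hA : A.PosDef) (q r : ℝ) :
    mpow A q * mpow A r = mpow A (q + r) := by
  simp only [hA.1.mpow_eq, Matrix.mul_assoc]
  rw [← Matrix.mul_assoc (star _) (hA.1.eigenvectorUnitary : Matrix (Fin d) (Fin d) ℝ),
    Unitary.coe_star_mul_self, Matrix.one_mul, ← Matrix.mul_assoc (diagonal _),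
    diagonal_mul_diagonal]
  simp_rw [← Real.rpow_add (hA.eigenvalues_pos _)]

theorem Matrix.IsHermitian.trace_mpow_mul_mpow (hA : A.IsHermitian) (hB : B.IsHermitian)
    (q r : ℝ) :
    (mpow A q * mpow B r).trace =
      ∑ i, ∑ j, (star (hA.eigenvectorUnitary : Matrix (Fin d) (Fin d) ℝ) *
        hB.eigenvectorUnitary) i j ^ 2 * hA.eigenvalues i ^ q * hB.eigenvalues j ^ r := by
  rw [hA.mpow_eq, hB.mpow_eq, trace_conj_diagonal_mul_conj_diagonal]

end mpow

/-- First-order concavity inequality for the trace functional `M ↦ tr(M^p)`. -/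
theorem trace_rpow_concave {d : ℕ} (A B : Matrix (Fin d) (Fin d) ℝ)
    (hA : A.PosDef) (hB : B.PosDef) (p : ℝ) (hp0 : 0 < p) (hp1 : p ≤ 1) :
    (mpow B p).trace - (mpow A p).trace ≤ p * (mpow A (p - 1) * (B - A)).trace := by
  set w := fun i j => (star (hA.1.eigenvectorUnitary : Matrix (Fin d) (Fin d) ℝ) *
    hB.1.eigenvectorUnitary) i j ^ 2
  set a := hA.1.eigenvalues
  set b := hB.1.eigenvalues
  have htrace := hA.1.trace_mpow_mul_mpow hB.1
  have hTB : (mpow B p).trace = ∑ i, ∑ j, w i j * b j ^ p := by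
    simpa [hA.1.mpow_zero] using htrace 0 p
  have hTA : (mpow A p).trace = ∑ i, ∑ j, w i j * a i ^ p := by
    simpa [hB.1.mpow_zero] using htrace p 0
  have hTAB : (mpow A (p - 1) * B).trace = ∑ i, ∑ j, w i j * a i ^ (p - 1) * b j := by
    simpa [hB.1.mpow_one] using htrace (p - 1) 1
  have hTAA : (mpow A (p - 1) * A).trace = (mpow A p).trace := by
    rw [← congrArg (mpow A (p - 1) * ·) hA.1.mpow_one, hA.mpow_mul_mpow, sub_add_cancel]
  rw [mul_sub, trace_sub, hTAA, hTB, hTAB, hTA]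
  exact Real.sum_sum_mul_rpow_sub_le (fun i j => sq_nonneg _) hA.eigenvalues_pos
    (fun j => (hB.eigenvalues_pos j).le) hp0.le hp1
end

section
/- Let V be a d×d real symmetric positive definite matrix, let u ∈ ℝᵈ satisfy ‖u‖₂ ≤ 1, and let p ∈ (0, 1]. Then ‖u‖_{V⁻¹}^{2p} ≤ (2 log(det(V + u uᵀ)/det V))^p + (3/(2p)) (tr(V^{−p}) − tr((V + u uᵀ)^{−p})). -/
open Matrix

/-! Write `s = uᵀ V⁻¹ u` and `W = V + u uᵀ`. The matrix determinant lemma gives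
`det W / det V = 1 + s`, so the claim follows from the scalar inequality
`s ^ p ≤ (2 log (1 + s)) ^ p + (3/2) s ^ (1 + p) / (1 + s)` and the trace bound
`p s ^ (1 + p) / (1 + s) ≤ tr V^(-p) - tr W^(-p)`.

For the trace bound, evaluate both traces in an orthonormal eigenbasis `(e_j, λ_j)` of `V`
and put `b_j = e_j ⬝ u`, so that `s = ∑ b_j² / λ_j` and `∑ b_j² = ‖u‖² ≤ 1`. Concavity of
`t ↦ t ^ p` gives `e_jᵀ W^(-p) e_j ≤ (e_jᵀ W⁻¹ e_j) ^ p`; Sherman–Morrison gives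
`e_jᵀ W⁻¹ e_j = λ_j⁻¹ (1 - r_j)` with `r_j = b_j² λ_j⁻¹ / (1 + s) ≤ 1`; Bernoulli gives
`(1 - r_j) ^ p ≤ 1 - p r_j`. What is left, `p/(1 + s) ∑ b_j² λ_j^(-(1 + p))`, dominates
`p s ^ (1 + p) / (1 + s)` by Jensen for the convex `t ↦ t ^ (1 + p)` with weights `b_j²` of
total mass at most one.
-/

lemma Real.rpow_arith_mean_le_arith_mean_rpow_of_sum_le_one {ι : Type*} (s : Finset ι) {w z : ι → ℝ}
    (hw : ∀ i ∈ s, 0 ≤ w i) (hw₁ : ∑ i ∈ s, w i ≤ 1) (hz : ∀ i ∈ s, 0 ≤ z i) {q : ℝ}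
    (hq : 1 ≤ q) :
    (∑ i ∈ s, w i * z i) ^ q ≤ ∑ i ∈ s, w i * z i ^ q := by
  have h := (convexOn_rpow hq).map_add_sum_le hw (by ring) hz (sub_nonneg.2 hw₁)
    (Set.mem_Ici.2 le_rfl : (0 : ℝ) ∈ Set.Ici 0)
  simpa [Real.zero_rpow (by linarith : q ≠ 0)] using h

lemma Real.rpow_mul_one_sub_le {z r p : ℝ} (hz : 0 ≤ z) (hr : r ≤ 1) (hp₀ : 0 ≤ p)
    (hp₁ : p ≤ 1) : (z * (1 - r)) ^ p ≤ z ^ p * (1 - p * r) := by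
  rw [Real.mul_rpow hz (by linarith)]
  have := rpow_one_add_le_one_add_mul_self (by linarith : -1 ≤ -r) hp₀ hp₁
  rw [← sub_eq_add_neg] at this
  exact mul_le_mul_of_nonneg_left (by linarith) (Real.rpow_nonneg hz p)

lemma rpow_le_two_mul_log_one_add_rpow_add {s p : ℝ} (hs : 0 ≤ s) (hp₀ : 0 ≤ p) (hp₁ : p ≤ 1) :
    s ^ p ≤ (2 * Real.log (1 + s)) ^ p + 3 / 2 * (s ^ (1 + p) / (1 + s)) := by
  have hrem : 0 ≤ 3 / 2 * (s ^ (1 + p) / (1 + s)) := by positivity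
  rcases le_total s 1 with hs₁ | hs₁
  · have hlog : s ≤ 2 * Real.log (1 + s) := by
      have h := Real.one_sub_inv_le_log_of_pos (by linarith : 0 < 1 + s)
      have : s / 2 ≤ 1 - (1 + s)⁻¹ := by
        rw [show 1 - (1 + s)⁻¹ = s / (1 + s) by field_simp; ring]
        exact div_le_div_of_nonneg_left hs (by linarith) (by linarith)
      linarith
    linarith [Real.rpow_le_rpow hs hlog hp₀]
  · have hone : 1 ≤ (2 * Real.log (1 + s)) ^ p := by
      refine Real.one_le_rpow ?_ hp₀
      linarith [Real.log_two_gt_d9, Real.log_le_log two_pos (by linarith : (2 : ℝ) ≤ 1 + s)]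
    have hsp : s ^ p ≤ s := Real.rpow_le_self_of_one_le hs₁ hp₁
    rw [Real.rpow_add (by linarith), Real.rpow_one]
    have : s ^ p ≤ 1 + 3 / 2 * (s * s ^ p / (1 + s)) := by
      rw [← sub_le_iff_le_add', mul_div_assoc', le_div_iff₀ (by linarith)]
      nlinarith [Real.rpow_nonneg hs p]
    linarith

lemma le_sum_rpow_sub_sum_rpow_mul_one_sub {ι : Type*} [Fintype ι] {z c : ι → ℝ} {s p : ℝ}
    (hz : ∀ i, 0 ≤ z i) (hc : ∀ i, 0 ≤ c i) (hc₁ : ∑ i, c i ≤ 1) (hs : ∑ i, c i * z i = s)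
    (hp₀ : 0 ≤ p) (hp₁ : p ≤ 1) :
    p * s ^ (1 + p) / (1 + s) ≤ ∑ i, z i ^ p - ∑ i, (z i * (1 - c i * z i / (1 + s))) ^ p := by
  have hcz : ∀ i, 0 ≤ c i * z i := fun i => mul_nonneg (hc i) (hz i)
  have hs₀ : 0 ≤ s := hs ▸ Finset.sum_nonneg fun i _ => hcz i
  have hr : ∀ i, c i * z i / (1 + s) ≤ 1 := fun i => by
    rw [div_le_one (by linarith), ← hs]
    linarith [Finset.single_le_sum (fun j _ => hcz j) (Finset.mem_univ i)]
  have hjensen : s ^ (1 + p) ≤ ∑ i, c i * z i ^ (1 + p) :=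
    hs ▸ Real.rpow_arith_mean_le_arith_mean_rpow_of_sum_le_one _ (fun i _ => hc i) hc₁
      (fun i _ => hz i) (by linarith)
  calc p * s ^ (1 + p) / (1 + s) ≤ p / (1 + s) * ∑ i, c i * z i ^ (1 + p) := by
        rw [mul_div_right_comm]
        exact mul_le_mul_of_nonneg_left hjensen (by positivity)
    _ = ∑ i, z i ^ p * (p * (c i * z i / (1 + s))) := by
        rw [Finset.mul_sum]
        refine Finset.sum_congr rfl fun i _ => ?_
        rw [Real.rpow_add' (hz i) (by linarith), Real.rpow_one]
        ring
    _ ≤ ∑ i, (z i ^ p - (z i * (1 - c i * z i / (1 + s))) ^ p) := by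
        refine Finset.sum_le_sum fun i _ => ?_
        linarith [Real.rpow_mul_one_sub_le (hz i) (hr i) hp₀ hp₁]
    _ = _ := Finset.sum_sub_distrib ..

namespace Matrix

variable {n : Type*} [Fintype n]

lemma IsHermitian.dotProduct_mulVec_comm {A : Matrix n n ℝ} (hA : A.IsHermitian) (x y : n → ℝ) :
    x ⬝ᵥ A *ᵥ y = y ⬝ᵥ A *ᵥ x := by
  rw [dotProduct_mulVec, ← mulVec_transpose, ← conjTranspose_eq_transpose_of_trivial, hA.eq,
    dotProduct_comm]

variable [DecidableEq n]

lemma det_add_vecMulVec_s7 {R : Type*} [CommRing R] {A : Matrix n n R} (hA : IsUnit A.det)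
    (u v : n → R) : (A + vecMulVec u v).det = A.det * (1 + v ⬝ᵥ A⁻¹ *ᵥ u) := by
  rw [vecMulVec_eq Unit, det_add_replicateCol_mul_replicateRow hA]
  congr 1
  rw [det_unique, Matrix.add_apply, one_apply_eq, Matrix.mul_assoc, ← replicateCol_mulVec,
    replicateRow_mul_replicateCol_apply]

lemma trace_eq_sum_dotProduct_mulVec (M : Matrix n n ℝ)
    (b : OrthonormalBasis n ℝ (EuclideanSpace ℝ n)) :
    M.trace = ∑ j, ⇑(b j) ⬝ᵥ M *ᵥ ⇑(b j) := by
  have h := LinearMap.trace_eq_sum_inner (toLpLin 2 2 M) b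
  rw [toLpLin_eq_toLin, trace_toLin_eq, ← toLpLin_eq_toLin] at h
  rw [h]
  refine Finset.sum_congr rfl fun j _ => ?_
  simp [EuclideanSpace.inner_eq_star_dotProduct, dotProduct_comm]

lemma dotProduct_conj_diagonal_mulVec (P : Matrix n n ℝ) (f : n → ℝ) (x y : n → ℝ) :
    x ⬝ᵥ (P * diagonal f * star P) *ᵥ y = ∑ k, f k * ((star P *ᵥ x) k * (star P *ᵥ y) k) := by
  rw [← mulVec_mulVec, ← mulVec_mulVec, dotProduct_mulVec, star_eq_conjTranspose,
    conjTranspose_eq_transpose_of_trivial, mulVec_transpose]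
  simp only [dotProduct, mulVec_diagonal, mulVec_transpose]
  exact Finset.sum_congr rfl fun k _ => by ring

lemma sum_sq_star_mulVec {P : Matrix n n ℝ} (hP : P ∈ unitaryGroup n ℝ) (x : n → ℝ) :
    ∑ k, (star P *ᵥ x) k ^ 2 = x ⬝ᵥ x := by
  have h := dotProduct_conj_diagonal_mulVec P (fun _ => 1) x x
  rw [diagonal_one, Matrix.mul_one, (mem_unitaryGroup_iff).1 hP, one_mulVec] at h
  simp [h, sq]

lemma IsHermitian.eq_conj_diagonal {A : Matrix n n ℝ} (hA : A.IsHermitian) :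
    A = (hA.eigenvectorUnitary : Matrix n n ℝ) * diagonal hA.eigenvalues *
      star (hA.eigenvectorUnitary : Matrix n n ℝ) := by
  conv_lhs => rw [hA.spectral_theorem]
  simp [Unitary.conjStarAlgAut_apply]

lemma PosDef.inv_eq_conj_diagonal {A : Matrix n n ℝ} (hA : A.PosDef) :
    A⁻¹ = (hA.1.eigenvectorUnitary : Matrix n n ℝ) * diagonal hA.1.eigenvalues⁻¹ *
      star (hA.1.eigenvectorUnitary : Matrix n n ℝ) := by
  refine inv_eq_left_inv ?_
  rw [congrArg (_ * ·) hA.1.eq_conj_diagonal]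
  set U := (hA.1.eigenvectorUnitary : Matrix n n ℝ)
  calc U * diagonal hA.1.eigenvalues⁻¹ * star U * (U * diagonal hA.1.eigenvalues * star U)
      = U * (diagonal hA.1.eigenvalues⁻¹ * (star U * U) * diagonal hA.1.eigenvalues) * star U := by
        simp only [Matrix.mul_assoc]
    _ = 1 := by simp [U, diagonal_mul_diagonal, (hA.eigenvalues_pos _).ne']

/-- Sherman–Morrison, read on quadratic forms. -/
lemma PosDef.dotProduct_inv_add_vecMulVec_mulVec {V : Matrix n n ℝ} (hV : V.PosDef)
    (u x : n → ℝ) :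
    x ⬝ᵥ (V + vecMulVec u u)⁻¹ *ᵥ x =
      x ⬝ᵥ V⁻¹ *ᵥ x - (x ⬝ᵥ V⁻¹ *ᵥ u) ^ 2 / (1 + u ⬝ᵥ V⁻¹ *ᵥ u) := by
  have hV' : IsUnit V.det := hV.det_pos.ne'.isUnit
  have hs : 0 ≤ u ⬝ᵥ V⁻¹ *ᵥ u := by simpa using hV.inv.posSemidef.dotProduct_mulVec_nonneg u
  have hW : IsUnit (V + vecMulVec u u).det := by
    rw [det_add_vecMulVec_s7 hV']
    exact (mul_pos hV.det_pos (by linarith)).ne'.isUnit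
  set y := (V + vecMulVec u u)⁻¹ *ᵥ x
  have hy : y + (u ⬝ᵥ y) • V⁻¹ *ᵥ u = V⁻¹ *ᵥ x := by
    have : (V + vecMulVec u u) *ᵥ y = x := by
      rw [mulVec_mulVec, mul_nonsing_inv _ hW, one_mulVec]
    rw [← this, add_mulVec, vecMulVec_mulVec, mulVec_add, mulVec_mulVec, nonsing_inv_mul _ hV',
      one_mulVec]
    simp [mulVec_smul]
  have huy : (u ⬝ᵥ y) * (1 + u ⬝ᵥ V⁻¹ *ᵥ u) = x ⬝ᵥ V⁻¹ *ᵥ u := by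
    have := congrArg (u ⬝ᵥ ·) hy
    simp only [dotProduct_add, dotProduct_smul, smul_eq_mul] at this
    rw [hV.inv.1.dotProduct_mulVec_comm x]
    linarith
  have hxy : x ⬝ᵥ y = x ⬝ᵥ V⁻¹ *ᵥ x - (u ⬝ᵥ y) * (x ⬝ᵥ V⁻¹ *ᵥ u) := by
    have := congrArg (x ⬝ᵥ ·) hy
    simp only [dotProduct_add, dotProduct_smul, smul_eq_mul] at this
    linarith
  rw [hxy, ← huy]
  field_simp

end Matrix

section MatrixPower

variable {d : ℕ}

lemma mpow_of_isHermitian {A : Matrix (Fin d) (Fin d) ℝ} (hA : A.IsHermitian) (q : ℝ) :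
    mpow A q = (hA.eigenvectorUnitary : Matrix (Fin d) (Fin d) ℝ) *
      diagonal (fun i => hA.eigenvalues i ^ q) *
      star (hA.eigenvectorUnitary : Matrix (Fin d) (Fin d) ℝ) :=
  dif_pos hA

lemma trace_mpow {A : Matrix (Fin d) (Fin d) ℝ} (hA : A.IsHermitian) (q : ℝ) :
    (mpow A q).trace = ∑ i, hA.eigenvalues i ^ q := by
  rw [mpow_of_isHermitian hA, trace_mul_cycle, Unitary.coe_star_mul_self, Matrix.one_mul,
    trace_diagonal]

/-- Jensen for the concave map `t ↦ t ^ p`, in the eigenbasis of `B`. -/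
lemma dotProduct_mpow_neg_mulVec_le {B : Matrix (Fin d) (Fin d) ℝ} (hB : B.PosDef)
    {x : Fin d → ℝ} (hx : x ⬝ᵥ x = 1) {p : ℝ} (hp₀ : 0 ≤ p) (hp₁ : p ≤ 1) :
    x ⬝ᵥ mpow B (-p) *ᵥ x ≤ (x ⬝ᵥ B⁻¹ *ᵥ x) ^ p := by
  set c := star (hB.1.eigenvectorUnitary : Matrix (Fin d) (Fin d) ℝ) *ᵥ x
  have hc : ∑ k, c k ^ 2 = 1 := (sum_sq_star_mulVec hB.1.eigenvectorUnitary.2 x).trans hx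
  have h := (Real.concaveOn_rpow hp₀ hp₁).le_map_sum (t := Finset.univ) (w := fun k => c k ^ 2)
    (p := fun k => (hB.1.eigenvalues k)⁻¹) (fun k _ => sq_nonneg _) hc
    (fun k _ => Set.mem_Ici.2 (inv_nonneg.2 (hB.eigenvalues_pos k).le))
  rw [mpow_of_isHermitian hB.1, hB.inv_eq_conj_diagonal, dotProduct_conj_diagonal_mulVec,
    dotProduct_conj_diagonal_mulVec]
  refine le_of_eq_of_le ?_ (h.trans_eq ?_)
  · refine Finset.sum_congr rfl fun k _ => ?_
    rw [Real.rpow_neg (hB.eigenvalues_pos k).le, ← Real.inv_rpow (hB.eigenvalues_pos k).le,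
      smul_eq_mul]
    ring
  · congr 1
    exact Finset.sum_congr rfl fun k _ => by rw [smul_eq_mul, Pi.inv_apply]; ring

lemma trace_mpow_neg_le_sum_rpow {B : Matrix (Fin d) (Fin d) ℝ} (hB : B.PosDef)
    (b : OrthonormalBasis (Fin d) ℝ (EuclideanSpace ℝ (Fin d))) {p : ℝ} (hp₀ : 0 ≤ p)
    (hp₁ : p ≤ 1) :
    (mpow B (-p)).trace ≤ ∑ j, (⇑(b j) ⬝ᵥ B⁻¹ *ᵥ ⇑(b j)) ^ p := by
  rw [trace_eq_sum_dotProduct_mulVec]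
  refine Finset.sum_le_sum fun j _ => dotProduct_mpow_neg_mulVec_le hB ?_ hp₀ hp₁
  have := b.inner_eq_one j
  rw [EuclideanSpace.inner_eq_star_dotProduct] at this
  simpa using this

lemma Matrix.PosDef.mul_rpow_div_le_trace_mpow_neg_sub {V : Matrix (Fin d) (Fin d) ℝ}
    (hV : V.PosDef) {u : Fin d → ℝ} (hu : u ⬝ᵥ u ≤ 1) {p : ℝ} (hp₀ : 0 ≤ p) (hp₁ : p ≤ 1) :
    p * (u ⬝ᵥ V⁻¹ *ᵥ u) ^ (1 + p) / (1 + u ⬝ᵥ V⁻¹ *ᵥ u) ≤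
      (mpow V (-p)).trace - (mpow (V + vecMulVec u u) (-p)).trace := by
  have hW : (V + vecMulVec u u).PosDef :=
    hV.add_posSemidef (by simpa using posSemidef_vecMulVec_self_star u)
  set U := (hV.1.eigenvectorUnitary : Matrix (Fin d) (Fin d) ℝ)
  set z := fun j => (hV.1.eigenvalues j)⁻¹
  set b := star U *ᵥ u
  have hinv : ∀ y j, ⇑(hV.1.eigenvectorBasis j) ⬝ᵥ V⁻¹ *ᵥ y = z j * (star U *ᵥ y) j :=
    fun y j => by
      rw [hV.inv_eq_conj_diagonal, dotProduct_conj_diagonal_mulVec,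
        hV.1.star_eigenvectorUnitary_mulVec]
      simp [Pi.single_apply, z, U]
  have hs : ∑ j, b j ^ 2 * z j = u ⬝ᵥ V⁻¹ *ᵥ u := by
    rw [hV.inv_eq_conj_diagonal, dotProduct_conj_diagonal_mulVec]
    exact Finset.sum_congr rfl fun j _ => by simp only [Pi.inv_apply, z, b, U]; ring
  have hWe : ∀ j, ⇑(hV.1.eigenvectorBasis j) ⬝ᵥ (V + vecMulVec u u)⁻¹ *ᵥ ⇑(hV.1.eigenvectorBasis j)
      = z j * (1 - b j ^ 2 * z j / (1 + u ⬝ᵥ V⁻¹ *ᵥ u)) := fun j => by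
    rw [hV.dotProduct_inv_add_vecMulVec_mulVec, hinv, hinv, hV.1.star_eigenvectorUnitary_mulVec]
    simp only [Pi.single_eq_same, b]
    ring
  generalize u ⬝ᵥ V⁻¹ *ᵥ u = s at hs hWe ⊢
  calc p * s ^ (1 + p) / (1 + s)
      ≤ ∑ j, z j ^ p - ∑ j, (z j * (1 - b j ^ 2 * z j / (1 + s))) ^ p :=
        le_sum_rpow_sub_sum_rpow_mul_one_sub (fun j => (inv_pos.2 (hV.eigenvalues_pos j)).le)
          (fun j => sq_nonneg _) ((sum_sq_star_mulVec hV.1.eigenvectorUnitary.2 u).trans_le hu)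
          hs hp₀ hp₁
    _ ≤ (mpow V (-p)).trace - (mpow (V + vecMulVec u u) (-p)).trace := by
        rw [trace_mpow hV.1]
        simp_rw [← hWe]
        gcongr with j
        · rw [Real.rpow_neg (hV.eigenvalues_pos j).le, Real.inv_rpow (hV.eigenvalues_pos j).le]
        · exact trace_mpow_neg_le_sum_rpow hW hV.1.eigenvectorBasis hp₀ hp₁

end MatrixPower

/-- Unconditional per-step bound in the proof of the generalized elliptical
potential lemma. -/
theorem per_step_bound {d : ℕ} (V : Matrix (Fin d) (Fin d) ℝ) (hV : V.PosDef)
    (u : Fin d → ℝ) (hu : Real.sqrt (u ⬝ᵥ u) ≤ 1)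
    (p : ℝ) (hp0 : 0 < p) (hp1 : p ≤ 1) :
    mnorm V⁻¹ u ^ (2 * p) ≤
      (2 * Real.log ((V + vecMulVec u u).det / V.det)) ^ p +
        3 / (2 * p) * ((mpow V (-p)).trace - (mpow (V + vecMulVec u u) (-p)).trace) := by
  have hs : 0 ≤ u ⬝ᵥ V⁻¹ *ᵥ u := by simpa using hV.inv.posSemidef.dotProduct_mulVec_nonneg u
  have hnorm : mnorm V⁻¹ u ^ (2 * p) = (u ⬝ᵥ V⁻¹ *ᵥ u) ^ p := by
    rw [mnorm, Real.sqrt_eq_rpow, ← Real.rpow_mul hs]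
    ring_nf
  have hdet : (V + vecMulVec u u).det / V.det = 1 + u ⬝ᵥ V⁻¹ *ᵥ u := by
    rw [det_add_vecMulVec_s7 hV.det_pos.ne'.isUnit, mul_div_cancel_left₀ _ hV.det_pos.ne']
  have htrace := hV.mul_rpow_div_le_trace_mpow_neg_sub (Real.sqrt_le_one.1 hu) hp0.le hp1
  rw [hnorm, hdet]
  generalize u ⬝ᵥ V⁻¹ *ᵥ u = s at hs htrace ⊢
  calc s ^ p ≤ (2 * Real.log (1 + s)) ^ p + 3 / 2 * (s ^ (1 + p) / (1 + s)) :=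
        rpow_le_two_mul_log_one_add_rpow_add hs hp0.le hp1
    _ = (2 * Real.log (1 + s)) ^ p + 3 / (2 * p) * (p * s ^ (1 + p) / (1 + s)) := by
        field_simp
    _ ≤ _ := by gcongr
end
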